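/- The quasi-metric space Q(4) has exactly three distinct lines, namely {p,q,r}, {p,q,s} and {r,s}, and none of these lines is universal. In particular Q(4) does not have the de Bruijn–Erdős property. -/

import Mathlib

/-- A quasi-metric on `V`: nonnegative, vanishing exactly on the diagonal,
and satisfying the (directed) triangle inequality. -/
def IsQuasiMetric {V : Type*} (d : V → V → ℝ) : Prop :=
  (∀ x y, 0 ≤ d x y) ∧ (∀ x y, d x y = 0 ↔ x = y) ∧ (∀ x y z, d x z ≤ d x y + d y z)

/-- Betweenness: `y` lies between `x` and `z` (all three pairwise distinct). -/
def BtwQM {V : Type*} (d : V → V → ℝ) (x y z : V) : Prop :=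
  x ≠ y ∧ y ≠ z ∧ x ≠ z ∧ d x z = d x y + d y z

/-- The line through `x` and `y`. -/
def lineQM {V : Type*} (d : V → V → ℝ) (x y : V) : Set V :=
  {z | d z y = d z x + d x y ∨ d x y = d x z + d z y ∨ d x z = d x y + d y z}

/-- The set of all lines of the space. -/
def linesQM {V : Type*} (d : V → V → ℝ) : Set (Set V) :=
  {ℓ | ∃ x y, x ≠ y ∧ ℓ = lineQM d x y}

/-- The four points of the space `Q(4)`. -/
inductive P4 : Type
  | p | s | q | r
deriving DecidableEq

open P4

/-- The quasi-metric of the space `Q(4)`. -/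
def dQ4 : P4 → P4 → ℝ
  | p, p => 0 | p, s => 1 | p, q => 1 | p, r => 3
  | s, p => 3 | s, s => 0 | s, q => 2 | s, r => 3
  | q, p => 1 | q, s => 2 | q, q => 0 | q, r => 2
  | r, p => 1 | r, s => 1 | r, q => 2 | r, r => 0

/-- The betweenness of `Q(4)`. -/
def BQ4 : Set (P4 × P4 × P4) := {(p, q, r), (r, p, q), (s, q, p), (q, p, s)}

/-!
On a space with `d x x = 0`, the line through `x ≠ y` consists of `x`, `y` and the points `z`
that form a betweenness triple with `x` and `y`, with `z` in any of the three positions. The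
betweenness triples of `Q(4)` are exactly the four in `BQ4`, and reading the twelve lines through
ordered pairs off them gives only `{p, q, r}`, `{p, q, s}` and `{r, s}`. Three lines on four
points, none of them universal, is precisely the failure of the de Bruijn–Erdős property.
-/

theorem Set.ncard_le_three {α : Type*} (a b c : α) : ({a, b, c} : Set α).ncard ≤ 3 :=
  (ncard_insert_le _ _).trans <| Nat.succ_le_succ <|
    (ncard_insert_le _ _).trans (by rw [ncard_singleton])

theorem lineQM_eq_insert_insert_btwQM {V : Type*} {d : V → V → ℝ} (hd : ∀ x, d x x = 0)
    {x y : V} (hxy : x ≠ y) :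
    lineQM d x y = insert x (insert y {z | BtwQM d z x y ∨ BtwQM d x z y ∨ BtwQM d x y z}) := by
  ext z
  by_cases hzx : z = x
  · subst hzx
    simp [lineQM, hd]
  by_cases hzy : z = y
  · subst hzy
    simp [lineQM, hd]
  simp [lineQM, BtwQM, hxy, hzx, hzy, Ne.symm hzx, Ne.symm hzy]

instance : Fintype P4 := ⟨{p, s, q, r}, fun x => by cases x <;> decide⟩

instance : DecidablePred (· ∈ BQ4) := fun t => by unfold BQ4; infer_instance

theorem dQ4_self (x : P4) : dQ4 x x = 0 := by
  cases x <;> rfl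

theorem btwQM_dQ4_iff {x y z : P4} : BtwQM dQ4 x y z ↔ (x, y, z) ∈ BQ4 := by
  cases x <;> cases y <;> cases z <;> simp [BtwQM, dQ4, BQ4] <;> norm_num

theorem mem_lineQM_dQ4 {x y z : P4} (hxy : x ≠ y) :
    z ∈ lineQM dQ4 x y ↔
      z = x ∨ z = y ∨ (z, x, y) ∈ BQ4 ∨ (x, z, y) ∈ BQ4 ∨ (x, y, z) ∈ BQ4 := by
  simp only [lineQM_eq_insert_insert_btwQM dQ4_self hxy, btwQM_dQ4_iff, Set.mem_insert_iff,
    Set.mem_ofPred_eq]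

theorem lineQM_dQ4_mem {x y : P4} (hxy : x ≠ y) :
    lineQM dQ4 x y ∈ ({{p, q, r}, {p, q, s}, {r, s}} : Set (Set P4)) := by
  simp only [Set.mem_insert_iff, Set.mem_singleton_iff, Set.ext_iff, mem_lineQM_dQ4 hxy]
  revert x y
  decide

theorem lineQM_dQ4_p_q : lineQM dQ4 p q = {p, q, r} := by
  ext z
  rw [mem_lineQM_dQ4 (by decide)]
  revert z
  decide

theorem lineQM_dQ4_p_s : lineQM dQ4 p s = {p, q, s} := by
  ext z
  rw [mem_lineQM_dQ4 (by decide)]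
  revert z
  decide

theorem lineQM_dQ4_r_s : lineQM dQ4 r s = {r, s} := by
  ext z
  rw [mem_lineQM_dQ4 (by decide)]
  revert z
  decide

theorem linesQM_dQ4 : linesQM dQ4 = {({p, q, r} : Set P4), {p, q, s}, {r, s}} := by
  ext ℓ
  constructor
  · rintro ⟨x, y, hxy, rfl⟩
    exact lineQM_dQ4_mem hxy
  · rintro (rfl | rfl | rfl)
    exacts [⟨p, q, by decide, lineQM_dQ4_p_q.symm⟩, ⟨p, s, by decide, lineQM_dQ4_p_s.symm⟩,
      ⟨r, s, by decide, lineQM_dQ4_r_s.symm⟩]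

theorem ne_univ_of_mem_linesQM_dQ4 {ℓ : Set P4} (hℓ : ℓ ∈ linesQM dQ4) : ℓ ≠ Set.univ := by
  rw [linesQM_dQ4] at hℓ
  rcases hℓ with rfl | rfl | rfl <;> rw [Ne, Set.eq_univ_iff_forall]
  exacts [fun h => by simpa using h s, fun h => by simpa using h r, fun h => by simpa using h p]

/-- `Q(4)` has exactly the three lines `{p,q,r}`, `{p,q,s}` and `{r,s}`,
none of which is universal; in particular `Q(4)` fails the de Bruijn–Erdős property. -/
theorem stmt_2 :
    linesQM dQ4 = {({p, q, r} : Set P4), {p, q, s}, {r, s}} ∧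
    (∀ ℓ ∈ linesQM dQ4, ℓ ≠ (Set.univ : Set P4)) ∧
    ¬ ((∃ x y : P4, x ≠ y ∧ lineQM dQ4 x y = Set.univ) ∨ 4 ≤ (linesQM dQ4).ncard) := by
  refine ⟨linesQM_dQ4, fun ℓ => ne_univ_of_mem_linesQM_dQ4, ?_⟩
  rintro (⟨x, y, hxy, huniv⟩ | hcard)
  · exact ne_univ_of_mem_linesQM_dQ4 ⟨x, y, hxy, rfl⟩ huniv
  · have := Set.ncard_le_three ({p, q, r} : Set P4) {p, q, s} {r, s}
    rw [linesQM_dQ4] at hcard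
    omega
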